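/- arXiv:math/0512031 — 2 statements merged into one kernel-verified Lean document; each statement's English description precedes it below -/
import Mathlib

section
/- The map ρ_B : B → C ⊗ B defined by ρ_B(b) = α(b₍₁₎)𝕀β(b₍₃₎) ⊗ b₍₂₎ is a coassociative C-comodule structure on B. -/
/- STATEMENT 18: The map ρ_B : B → C ⊗ B, ρ_B(b) = α(b₍₁₎)𝕀β(b₍₃₎) ⊗ b₍₂₎, is a
coassociative C-comodule structure on B. -/

open TensorProduct

noncomputable section

variable (k : Type) [Field k] (B : Type) [Ring B] [Bialgebra k B]
variable (C : Type) [AddCommGroup C] [Module k C]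
variable (DeltaC : C →ₗ[k] C ⊗[k] C)
variable (l : B →ₗ[k] C →ₗ[k] C) (r : B →ₗ[k] C →ₗ[k] C)
variable (alpha : B →ₗ[k] B) (beta : B →ₗ[k] B) (I : C)

def Delta2B : B →ₗ[k] (B ⊗[k] B) ⊗[k] B :=
  (TensorProduct.map Coalgebra.comul LinearMap.id) ∘ₗ Coalgebra.comul

variable {A A' A'' : Type} [AddCommGroup A] [AddCommGroup A'] [AddCommGroup A'']
  [Module k A] [Module k A'] [Module k A'']

def sw3 : (A ⊗[k] A') ⊗[k] A'' →ₗ[k] (A ⊗[k] A'') ⊗[k] A' :=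
  (TensorProduct.assoc k A A'' A').symm.toLinearMap
    ∘ₗ (TensorProduct.map LinearMap.id (TensorProduct.comm k A' A'').toLinearMap)
    ∘ₗ (TensorProduct.assoc k A A' A'').toLinearMap

/-- `(a ⊗ b) ⊗ c ↦ α(a) c β(b)`, the two-sided action on one `C`-leg. -/
def legB : (B ⊗[k] B) ⊗[k] C →ₗ[k] C :=
  TensorProduct.lift (TensorProduct.lift (LinearMap.mk₂ k
    (fun (a b : B) => (l (alpha a)) ∘ₗ (r (beta b)))
    (fun a a' b => by simp [map_add, LinearMap.add_comp])
    (fun c a b => by simp [map_smul, LinearMap.smul_comp])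
    (fun a b b' => by simp [map_add, LinearMap.comp_add])
    (fun c a b => by simp [map_smul, LinearMap.comp_smul])))

/-- `𝒦ⁿ_{(α,β)}(C,B) = C^⊗n ⊗ B`, nested as `C ⊗ (C ⊗ (⋯ ⊗ B))`. -/
def KB : ℕ → ModuleCat k := fun n =>
  Nat.rec (ModuleCat.of k B) (fun _ ih => ModuleCat.of k (C ⊗[k] ih)) n

/-- The left action of `B` on `𝒦ⁿ_{(α,β)}(C,B)`:
`b·(c¹⊗⋯⊗cⁿ⊗b') = α(b₍₁₎)c¹β(b₍₂ₙ₊₁₎)⊗⋯⊗α(b₍ₙ₎)cⁿβ(b₍ₙ₊₂₎)⊗b₍ₙ₊₁₎b'`. -/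
def lactB : ∀ n : ℕ, B ⊗[k] (KB k B C n) →ₗ[k] (KB k B C n)
  | 0 => LinearMap.mul' k B
  | n + 1 =>
    (TensorProduct.map (legB k B C l r alpha beta) (lactB n))
      ∘ₗ (TensorProduct.tensorTensorTensorComm k (B ⊗[k] B) B C (KB k B C n)).toLinearMap
      ∘ₗ (TensorProduct.map (sw3 k ∘ₗ Delta2B k B) LinearMap.id)

/-- The product of `𝒦*_{(α,β)}(C,B)`. -/
def muB : ∀ (n m : ℕ), (KB k B C n) ⊗[k] (KB k B C m) →ₗ[k] KB k B C (m + n)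
  | 0, m => lactB k B C l r alpha beta m
  | n + 1, m =>
    (TensorProduct.map LinearMap.id (muB n m))
      ∘ₗ (TensorProduct.assoc k C (KB k B C n) (KB k B C m)).toLinearMap

/-- `b₁ ⊗ b₃ ↦ α(b₁) 𝕀 β(b₃)`. -/
def xiB : B ⊗[k] B →ₗ[k] C :=
  TensorProduct.lift (LinearMap.mk₂ k
    (fun (a b : B) => l (alpha a) (r (beta b) I))
    (fun a a' b => by simp [map_add, LinearMap.add_apply])
    (fun c a b => by simp [map_smul, LinearMap.smul_apply])
    (fun a b b' => by simp [map_add, LinearMap.add_apply])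
    (fun c a b => by simp [map_smul, LinearMap.smul_apply]))

/-- `ρ_B(b) = α(b₍₁₎)𝕀β(b₍₃₎) ⊗ b₍₂₎`. -/
def rhoB : B →ₗ[k] C ⊗[k] B :=
  (TensorProduct.map (xiB k B C l r alpha beta I) LinearMap.id)
    ∘ₗ sw3 k ∘ₗ Delta2B k B

def unrollB (n : ℕ) : (KB k B C (n + 1)) →ₗ[k] C ⊗[k] (KB k B C n) := LinearMap.id

/-- The differential of `𝒦*_{(α,β)}(C,B)`. -/
def dB : ∀ n : ℕ, (KB k B C n) →ₗ[k] (KB k B C (n + 1))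
  | 0 => rhoB k B C l r alpha beta I - (TensorProduct.mk k C B I)
  | n + 1 =>
    ((TensorProduct.assoc k C C (KB k B C n)).toLinearMap
        ∘ₗ (TensorProduct.map DeltaC LinearMap.id))
      - ((TensorProduct.mk k C (C ⊗[k] (KB k B C n))) I)
      - (TensorProduct.map (LinearMap.id : C →ₗ[k] C)
          ((TensorProduct.mk k C (KB k B C n)) I))
      - (TensorProduct.map (LinearMap.id : C →ₗ[k] C)
          (unrollB k B C n ∘ₗ dB n))

def dcastB {a b : ℕ} (h : a = b) : (KB k B C a) →ₗ[k] (KB k B C b) := by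
  subst h; exact LinearMap.id


/-! Since `Δ_C` is a bimodule map, `𝕀` is grouplike, `α` is a coalgebra map and `β` an
anti-coalgebra map, `ξ(a ⊗ c) = α(a)𝕀β(c)` satisfies
`Δ_C(ξ(a ⊗ c)) = ξ(a₍₁₎ ⊗ c₍₂₎) ⊗ ξ(a₍₂₎ ⊗ c₍₁₎)`.
By coassociativity of `B`, both sides of the coassociativity of `ρ_B` then become
`ξ(b₍₁₎ ⊗ b₍₅₎) ⊗ ξ(b₍₂₎ ⊗ b₍₄₎) ⊗ b₍₃₎`. -/

open LinearMap (id)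
open Coalgebra (comul)

theorem sw3_comp_map_map {M N P M' N' P' : Type} [AddCommGroup M] [AddCommGroup N]
    [AddCommGroup P] [AddCommGroup M'] [AddCommGroup N'] [AddCommGroup P'] [Module k M]
    [Module k N] [Module k P] [Module k M'] [Module k N'] [Module k P']
    (f : M →ₗ[k] M') (g : N →ₗ[k] N') (h : P →ₗ[k] P') :
    sw3 k ∘ₗ map (map f g) h = map (map f h) g ∘ₗ sw3 k := by
  ext; rfl

-- Both sides are the five-fold coproduct `b₍₁₎ ⊗ ⋯ ⊗ b₍₅₎`, bracketed differently.
theorem map_map_comul_comul_comp_Delta2B :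
    map (map comul id) comul ∘ₗ Delta2B k B =
      ((TensorProduct.assoc k _ B B).toLinearMap ∘ₗ
        map (map (TensorProduct.assoc k B B B).symm.toLinearMap id ∘ₗ
          (TensorProduct.assoc k B (B ⊗[k] B) B).symm.toLinearMap) id) ∘ₗ
        map (map id (Delta2B k B)) id ∘ₗ Delta2B k B := by
  simp only [Delta2B, coassoc_simps]

theorem coassoc_of_comul_comp_eq (ξ : B ⊗[k] B →ₗ[k] C)
    (hξ : DeltaC ∘ₗ ξ = map ξ ξ ∘ₗ (tensorTensorTensorComm k B B B B).toLinearMap ∘ₗ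
      map id (TensorProduct.comm k B B).toLinearMap ∘ₗ map comul comul) :
    (TensorProduct.assoc k C C B).toLinearMap ∘ₗ map DeltaC id ∘ₗ
        map ξ id ∘ₗ sw3 k ∘ₗ Delta2B k B =
      map id (map ξ id ∘ₗ sw3 k ∘ₗ Delta2B k B) ∘ₗ map ξ id ∘ₗ sw3 k ∘ₗ Delta2B k B := by
  set K := map ξ ξ ∘ₗ (tensorTensorTensorComm k B B B B).toLinearMap ∘ₗ
    map id (TensorProduct.comm k B B).toLinearMap
  set F : (B ⊗[k] B) ⊗[k] B →ₗ[k] C ⊗[k] B := map ξ id ∘ₗ sw3 k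
  have hleft : (TensorProduct.assoc k C C B).toLinearMap ∘ₗ map DeltaC id ∘ₗ F =
      (TensorProduct.assoc k C C B).toLinearMap ∘ₗ map K id ∘ₗ sw3 k ∘ₗ
        map (map comul id) comul := by
    ext a b c
    simpa [F, K, sw3] using congr($hξ (a ⊗ₜ c) ⊗ₜ[k] b)
  have hmiddle : (TensorProduct.assoc k C C B).toLinearMap ∘ₗ map K id ∘ₗ sw3 k ∘ₗ
      (TensorProduct.assoc k _ B B).toLinearMap ∘ₗ
        map (map (TensorProduct.assoc k B B B).symm.toLinearMap id ∘ₗ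
          (TensorProduct.assoc k B (B ⊗[k] B) B).symm.toLinearMap) id =
      map ξ F ∘ₗ sw3 k := by
    ext
    rfl
  have hright : map id (F ∘ₗ Delta2B k B) ∘ₗ F =
      map ξ F ∘ₗ sw3 k ∘ₗ map (map id (Delta2B k B)) id := by
    ext
    rfl
  calc _ = ((TensorProduct.assoc k C C B).toLinearMap ∘ₗ map K id ∘ₗ sw3 k) ∘ₗ
          map (map comul id) comul ∘ₗ Delta2B k B :=
        congrArg (· ∘ₗ Delta2B k B) hleft
    _ = (map ξ F ∘ₗ sw3 k) ∘ₗ map (map id (Delta2B k B)) id ∘ₗ Delta2B k B := by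
        rw [map_map_comul_comul_comp_Delta2B, ← hmiddle]
        rfl
    _ = _ := (congrArg (· ∘ₗ Delta2B k B) hright).symm

theorem comul_comp_flip_of_grouplike
    (hbimR : DeltaC ∘ₗ lift r = map (lift r) (lift r) ∘ₗ
      (tensorTensorTensorComm k B B C C).toLinearMap ∘ₗ map comul DeltaC)
    (hI : DeltaC I = I ⊗ₜ[k] I) :
    DeltaC ∘ₗ r.flip I = map (r.flip I) (r.flip I) ∘ₗ comul := by
  ext b
  have h := congr($hbimR (b ⊗ₜ I))
  simp only [LinearMap.comp_apply, TensorProduct.lift.tmul, TensorProduct.map_tmul, hI] at h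
  rw [LinearMap.comp_apply, LinearMap.comp_apply, LinearMap.flip_apply, h]
  induction comul (R := k) b using TensorProduct.induction_on with
  | zero => simp
  | tmul x y => simp
  | add x y hx hy => rw [TensorProduct.add_tmul, map_add, map_add, hx, hy, map_add]

theorem xiB_eq_lift_comp_map :
    xiB k B C l r alpha beta I = lift l ∘ₗ map alpha (r.flip I ∘ₗ beta) := by
  ext; rfl

theorem comul_comp_xiB
    (hbimL : DeltaC ∘ₗ lift l = map (lift l) (lift l) ∘ₗ
      (tensorTensorTensorComm k B B C C).toLinearMap ∘ₗ map comul DeltaC)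
    (hbimR : DeltaC ∘ₗ lift r = map (lift r) (lift r) ∘ₗ
      (tensorTensorTensorComm k B B C C).toLinearMap ∘ₗ map comul DeltaC)
    (hI : DeltaC I = I ⊗ₜ[k] I)
    (hac : comul ∘ₗ alpha = map alpha alpha ∘ₗ comul)
    (hbc : comul ∘ₗ beta = (TensorProduct.comm k B B).toLinearMap ∘ₗ map beta beta ∘ₗ comul) :
    DeltaC ∘ₗ xiB k B C l r alpha beta I =
      map (xiB k B C l r alpha beta I) (xiB k B C l r alpha beta I) ∘ₗ
        (tensorTensorTensorComm k B B B B).toLinearMap ∘ₗ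
        map id (TensorProduct.comm k B B).toLinearMap ∘ₗ map comul comul := by
  calc DeltaC ∘ₗ xiB k B C l r alpha beta I
      = map (lift l) (lift l) ∘ₗ (tensorTensorTensorComm k B B C C).toLinearMap ∘ₗ
          map (comul ∘ₗ alpha) (DeltaC ∘ₗ r.flip I ∘ₗ beta) := by
        rw [xiB_eq_lift_comp_map, ← LinearMap.comp_assoc, hbimL, LinearMap.comp_assoc,
          LinearMap.comp_assoc, ← TensorProduct.map_comp]
    _ = map (lift l) (lift l) ∘ₗ (tensorTensorTensorComm k B B C C).toLinearMap ∘ₗ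
          map (map alpha alpha)
            (map (r.flip I) (r.flip I) ∘ₗ
              (TensorProduct.comm k B B).toLinearMap ∘ₗ map beta beta) ∘ₗ
          map comul comul := by
        rw [← LinearMap.comp_assoc beta (r.flip I) DeltaC,
          comul_comp_flip_of_grouplike k B C DeltaC r I hbimR hI, LinearMap.comp_assoc, hbc,
          hac, ← TensorProduct.map_comp]
        simp only [LinearMap.comp_assoc]
    _ = _ := by
        simp only [← LinearMap.comp_assoc]
        congr 1
        ext
        rfl

theorem statement18
    -- `Δ_C` is a morphism of `B`-bimodules (diagonal actions):
    (hbimL : DeltaC ∘ₗ TensorProduct.lift l =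
        (TensorProduct.map (TensorProduct.lift l) (TensorProduct.lift l))
          ∘ₗ (TensorProduct.tensorTensorTensorComm k B B C C).toLinearMap
          ∘ₗ (TensorProduct.map Coalgebra.comul DeltaC))
    (hbimR : DeltaC ∘ₗ TensorProduct.lift r =
        (TensorProduct.map (TensorProduct.lift r) (TensorProduct.lift r))
          ∘ₗ (TensorProduct.tensorTensorTensorComm k B B C C).toLinearMap
          ∘ₗ (TensorProduct.map Coalgebra.comul DeltaC))
    -- `𝕀` is a grouplike element of `C`:
    (hI : DeltaC I = I ⊗ₜ[k] I)
    -- `α : B → B` is a morphism of bialgebras: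
    (hac : Coalgebra.comul ∘ₗ alpha = (TensorProduct.map alpha alpha) ∘ₗ Coalgebra.comul)
    -- `β : B → B^{op,cop}` is a morphism of bialgebras:
    (hbc : Coalgebra.comul ∘ₗ beta =
        (TensorProduct.comm k B B).toLinearMap
          ∘ₗ (TensorProduct.map beta beta) ∘ₗ Coalgebra.comul)
    :
    -- coassociativity of `ρ_B` as a `C`-comodule structure on `B`:
    (TensorProduct.assoc k C C B).toLinearMap
        ∘ₗ (TensorProduct.map DeltaC LinearMap.id)
        ∘ₗ rhoB k B C l r alpha beta I =
      (TensorProduct.map LinearMap.id (rhoB k B C l r alpha beta I))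
        ∘ₗ rhoB k B C l r alpha beta I :=
  coassoc_of_comul_comp_eq k B C DeltaC _
    (comul_comp_xiB k B C DeltaC l r alpha beta I hbimL hbimR hI hac hbc)

end
end

section
/- Let X be a B-module and a k-linear map ρ_X : X → C⊗X, and set ∇(x) = ρ_X(x) − 𝕀⊗x. Then ∇ is a flat connection with respect to 𝒦*_{(α,β)}(C,B) if and only if ρ_X is a coassociative C-coaction satisfying the (α,β)-equivariance condition ρ_X(bx) = α(b₍₁₎) x₍₋₁₎ β(b₍₃₎) ⊗ b₍₂₎ x₍₀₎ for all b ∈ B, x ∈ X. -/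
/-!
Put `ρ = ∇ + 𝕀 ⊗ ·`. Since `d(b) = ρ_B(b) − 𝕀 ⊗ b` and `b · (𝕀 ⊗ x) = ρ_B(b) ⊗_B x`, the Leibniz
rule for `∇` is literally the `(α,β)`-equivariance of `ρ`. Since `d(c ⊗ 1) = Δ(c) ⊗ 1 − 𝕀 ⊗ c ⊗ 1 −
c ⊗ 𝕀 ⊗ 1` and `𝕀` is grouplike, the `𝕀`-terms cancel to give
`∇̂(∇x) = (Δ ⊗ id)ρ(x) − (id ⊗ ρ)ρ(x)`, so flatness is literally coassociativity.
-/

open TensorProduct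

noncomputable section

variable (k : Type) [Field k] (B : Type) [Ring B] [Bialgebra k B]
variable (C : Type) [AddCommGroup C] [Module k C]
variable (DeltaC : C →ₗ[k] C ⊗[k] C)
variable (l : B →ₗ[k] C →ₗ[k] C) (r : B →ₗ[k] C →ₗ[k] C)
variable (alpha : B →ₗ[k] B) (beta : B →ₗ[k] B) (I : C)

variable {A A' A'' : Type} [AddCommGroup A] [AddCommGroup A'] [AddCommGroup A'']
  [Module k A] [Module k A'] [Module k A'']

variable (X : Type) [AddCommGroup X] [Module k X] [Module B X]
  [IsScalarTower k B X] [SMulCommClass B k X]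

def actMapB : B ⊗[k] X →ₗ[k] X :=
  TensorProduct.lift (LinearMap.mk₂ k (fun (b : B) (x : X) => b • x)
    (fun h h' x => add_smul h h' x)
    (fun c h x => smul_assoc c h x)
    (fun h x y => smul_add h x y)
    (fun c h x => smul_comm h c x))

/-- The action of `B` on `𝒦¹ ⊗_B X ≅ C ⊗ X` : `b·(c⊗x) = α(b₍₁₎)cβ(b₍₃₎) ⊗ b₍₂₎x`. -/
def twistCB : B ⊗[k] (C ⊗[k] X) →ₗ[k] C ⊗[k] X :=
  (TensorProduct.map (legB k B C l r alpha beta) (actMapB k B X))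
    ∘ₗ (TensorProduct.tensorTensorTensorComm k (B ⊗[k] B) B C X).toLinearMap
    ∘ₗ (TensorProduct.map (sw3 k ∘ₗ Delta2B k B) LinearMap.id)

/-- `(c ⊗ b) ⊗ x ↦ c ⊗ bx`, i.e. `ω ⊗_B x` under `𝒦¹ ⊗_B X ≅ C ⊗ X`. -/
def pairCB : (C ⊗[k] B) ⊗[k] X →ₗ[k] C ⊗[k] X :=
  (TensorProduct.map LinearMap.id (actMapB k B X))
    ∘ₗ (TensorProduct.assoc k C B X).toLinearMap

/-- `c ↦ d(c ⊗ 1) ∈ 𝒦²`. -/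
def AcB : C →ₗ[k] KB k B C 2 :=
  dB k B C DeltaC l r alpha beta I 1 ∘ₗ ((TensorProduct.mk k C B).flip 1)

/-- `𝒦² ⊗_B X ≅ C ⊗ (C ⊗ X)`. -/
def iotaB2 : (C ⊗[k] (C ⊗[k] B)) ⊗[k] X →ₗ[k] C ⊗[k] (C ⊗[k] X) :=
  (TensorProduct.map LinearMap.id (TensorProduct.map LinearMap.id (actMapB k B X)))
    ∘ₗ (TensorProduct.map LinearMap.id (TensorProduct.assoc k C B X).toLinearMap)
    ∘ₗ (TensorProduct.assoc k C (C ⊗[k] B) X).toLinearMap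

/-- The extended connection `∇̂(c⊗x) = d(c⊗1) ⊗_B x − (c⊗1)·∇(x)`. -/
def nablaHatB (nabla : X →ₗ[k] C ⊗[k] X) : C ⊗[k] X →ₗ[k] C ⊗[k] (C ⊗[k] X) :=
  (iotaB2 k B C X
      ∘ₗ (TensorProduct.map (AcB k B C DeltaC l r alpha beta I) LinearMap.id))
    - (TensorProduct.map LinearMap.id nabla)

section

variable {k B C DeltaC l r alpha beta I X}

lemma rhoB_one (ha1 : alpha 1 = 1) (hb1 : beta 1 = 1) (hl1 : l 1 = LinearMap.id)
    (hr1 : r 1 = LinearMap.id) :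
    rhoB k B C l r alpha beta I 1 = I ⊗ₜ[k] 1 := by
  simp [rhoB, Delta2B, sw3, xiB, Algebra.TensorProduct.one_def, ha1, hb1, hl1, hr1]

-- `KB k B C 2` is only definitionally `C ⊗ (C ⊗ B)`: the subtractions must be those of the latter.
lemma AcB_apply (ha1 : alpha 1 = 1) (hb1 : beta 1 = 1) (hl1 : l 1 = LinearMap.id)
    (hr1 : r 1 = LinearMap.id) (c : C) :
    @Eq (C ⊗[k] (C ⊗[k] B)) (AcB k B C DeltaC l r alpha beta I c)
      (TensorProduct.assoc k C C B (DeltaC c ⊗ₜ[k] 1)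
        - I ⊗ₜ[k] (c ⊗ₜ[k] 1) - c ⊗ₜ[k] (I ⊗ₜ[k] 1)) := by
  change (TensorProduct.assoc k C C B (DeltaC c ⊗ₜ[k] 1) - I ⊗ₜ[k] (c ⊗ₜ[k] 1)
      - c ⊗ₜ[k] (I ⊗ₜ[k] 1) - c ⊗ₜ[k] (rhoB k B C l r alpha beta I 1 - I ⊗ₜ[k] 1)) = _
  rw [rhoB_one ha1 hb1 hl1 hr1, sub_self, TensorProduct.tmul_zero, sub_zero]

lemma legB_tmul_I (p : B ⊗[k] B) :
    legB k B C l r alpha beta (p ⊗ₜ[k] I) = xiB k B C l r alpha beta I p := by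
  induction p using TensorProduct.induction_on with
  | zero => simp
  | tmul a b => simp [legB, xiB]
  | add u v hu hv => simp [add_tmul, hu, hv]

lemma twistCB_tmul_I_tmul (b : B) (x : X) :
    twistCB k B C l r alpha beta X (b ⊗ₜ[k] (I ⊗ₜ[k] x)) =
      pairCB k B C X (rhoB k B C l r alpha beta I b ⊗ₜ[k] x) := by
  suffices ∀ t : (B ⊗[k] B) ⊗[k] B,
      TensorProduct.map (legB k B C l r alpha beta) (actMapB k B X)
        (TensorProduct.tensorTensorTensorComm k (B ⊗[k] B) B C X (t ⊗ₜ[k] (I ⊗ₜ[k] x))) =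
      pairCB k B C X (TensorProduct.map (xiB k B C l r alpha beta I) LinearMap.id t ⊗ₜ[k] x) from
    this (sw3 k (Delta2B k B b))
  intro t
  induction t using TensorProduct.induction_on with
  | zero => simp
  | tmul p b' => simp [legB_tmul_I, pairCB, actMapB]
  | add u v hu hv => simp [add_tmul, hu, hv]

lemma iotaB2_assoc_tmul_one (t : C ⊗[k] C) (x : X) :
    iotaB2 k B C X (TensorProduct.assoc k C C B (t ⊗ₜ[k] 1) ⊗ₜ[k] x) =
      TensorProduct.assoc k C C X (t ⊗ₜ[k] x) := by
  induction t using TensorProduct.induction_on with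
  | zero => simp only [zero_tmul, map_zero]
  | tmul a b => simp [iotaB2, actMapB]
  | add u v hu hv => simp only [add_tmul, map_add, hu, hv]

lemma nablaHatB_eq (ha1 : alpha 1 = 1) (hb1 : beta 1 = 1) (hl1 : l 1 = LinearMap.id)
    (hr1 : r 1 = LinearMap.id) (nabla : X →ₗ[k] C ⊗[k] X) :
    nablaHatB k B C DeltaC l r alpha beta I X nabla =
      (TensorProduct.assoc k C C X).toLinearMap ∘ₗ TensorProduct.map DeltaC LinearMap.id
        - TensorProduct.mk k C (C ⊗[k] X) I
        - TensorProduct.map LinearMap.id (TensorProduct.mk k C X I)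
        - TensorProduct.map LinearMap.id nabla := by
  refine TensorProduct.ext' fun c x => ?_
  change iotaB2 k B C X (TensorProduct.mk k (C ⊗[k] (C ⊗[k] B)) X
    (AcB k B C DeltaC l r alpha beta I c) x) - c ⊗ₜ[k] nabla x = _
  rw [AcB_apply ha1 hb1 hl1 hr1, TensorProduct.mk_apply, sub_tmul, sub_tmul, map_sub, map_sub,
    iotaB2_assoc_tmul_one]
  simp [iotaB2, actMapB]

variable (I) in
def coactionOf (nabla : X →ₗ[k] C ⊗[k] X) : X →ₗ[k] C ⊗[k] X :=
  nabla + TensorProduct.mk k C X I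

lemma nablaHatB_apply_nabla (ha1 : alpha 1 = 1) (hb1 : beta 1 = 1)
    (hl1 : l 1 = LinearMap.id) (hr1 : r 1 = LinearMap.id) (hI : DeltaC I = I ⊗ₜ[k] I)
    (nabla : X →ₗ[k] C ⊗[k] X) (x : X) :
    nablaHatB k B C DeltaC l r alpha beta I X nabla (nabla x) =
      TensorProduct.assoc k C C X
          (TensorProduct.map DeltaC LinearMap.id (coactionOf I nabla x))
        - TensorProduct.map LinearMap.id (coactionOf I nabla) (coactionOf I nabla x) := by
  rw [nablaHatB_eq ha1 hb1 hl1 hr1]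
  simp only [coactionOf, LinearMap.sub_apply, LinearMap.add_apply, LinearMap.coe_comp,
    Function.comp_apply, TensorProduct.mk_apply, map_add, TensorProduct.map_add_right,
    TensorProduct.map_tmul, hI, LinearMap.id_coe, id_eq, LinearEquiv.coe_coe,
    TensorProduct.assoc_tmul]
  abel

lemma flat_iff_coassoc (ha1 : alpha 1 = 1) (hb1 : beta 1 = 1)
    (hl1 : l 1 = LinearMap.id) (hr1 : r 1 = LinearMap.id) (hI : DeltaC I = I ⊗ₜ[k] I)
    (nabla : X →ₗ[k] C ⊗[k] X) :
    (∀ x, nablaHatB k B C DeltaC l r alpha beta I X nabla (nabla x) = 0) ↔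
      (TensorProduct.assoc k C C X).toLinearMap ∘ₗ TensorProduct.map DeltaC LinearMap.id
          ∘ₗ coactionOf I nabla =
        TensorProduct.map LinearMap.id (coactionOf I nabla) ∘ₗ coactionOf I nabla := by
  simp only [nablaHatB_apply_nabla ha1 hb1 hl1 hr1 hI, sub_eq_zero, LinearMap.ext_iff,
    LinearMap.comp_apply, LinearEquiv.coe_coe]

lemma leibniz_iff_equivariant (nabla : X →ₗ[k] C ⊗[k] X) (b : B) (x : X) :
    nabla (b • x) =
        twistCB k B C l r alpha beta X (b ⊗ₜ[k] nabla x)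
          + pairCB k B C X (dB k B C DeltaC l r alpha beta I 0 b ⊗ₜ[k] x) ↔
      coactionOf I nabla (b • x) =
        twistCB k B C l r alpha beta X (b ⊗ₜ[k] coactionOf I nabla x) := by
  have hIb : pairCB k B C X ((I ⊗ₜ[k] b) ⊗ₜ[k] x) = I ⊗ₜ[k] (b • x) := by
    simp [pairCB, actMapB]
  change _ = _ + pairCB k B C X ((rhoB k B C l r alpha beta I b - I ⊗ₜ[k] b) ⊗ₜ[k] x) ↔ _
  rw [sub_tmul, map_sub, hIb, ← twistCB_tmul_I_tmul, coactionOf, LinearMap.add_apply,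
    LinearMap.add_apply, TensorProduct.mk_apply, TensorProduct.mk_apply, tmul_add, map_add,
    ← add_sub_assoc, eq_sub_iff_add_eq]

end

theorem statement19
    -- `C` is a `B`-bimodule:
    (hl1 : l 1 = LinearMap.id)
    (hr1 : r 1 = LinearMap.id)
    -- `𝕀` is a grouplike element of `C`:
    (hI : DeltaC I = I ⊗ₜ[k] I)
    -- `α : B → B` is a morphism of bialgebras:
    (ha1 : alpha 1 = 1)
    -- `β : B → B^{op,cop}` is a morphism of bialgebras:
    (hb1 : beta 1 = 1)
    (nabla : X →ₗ[k] C ⊗[k] X) :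
    -- `∇` is a connection (Leibniz rule) which is flat …
    ((∀ (b : B) (x : X),
        nabla (b • x) =
          twistCB k B C l r alpha beta X (b ⊗ₜ[k] nabla x)
            + pairCB k B C X
                ((dB k B C DeltaC l r alpha beta I 0 b) ⊗ₜ[k] x)) ∧
      (∀ x : X,
        nablaHatB k B C DeltaC l r alpha beta I X nabla (nabla x) = 0))
    ↔
    -- … iff `ρ_X := ∇ + 𝕀⊗·` is a coassociative `C`-coaction satisfying the
    -- `(α,β)`-equivariance condition:
    (((TensorProduct.assoc k C C X).toLinearMap
        ∘ₗ (TensorProduct.map DeltaC LinearMap.id)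
        ∘ₗ (nabla + (TensorProduct.mk k C X) I) =
      (TensorProduct.map LinearMap.id (nabla + (TensorProduct.mk k C X) I))
        ∘ₗ (nabla + (TensorProduct.mk k C X) I)) ∧
     (∀ (b : B) (x : X),
        (nabla + (TensorProduct.mk k C X) I) (b • x) =
          twistCB k B C l r alpha beta X
            (b ⊗ₜ[k] (nabla + (TensorProduct.mk k C X) I) x))) := by
  exact (and_congr (forall₂_congr (leibniz_iff_equivariant nabla))
    (flat_iff_coassoc ha1 hb1 hl1 hr1 hI nabla)).trans and_comm

end
end
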